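/- Discrete Poincaré inequality: for Ω ⊂ ℝ^d open and bounded there is C_P(Ω) > 0 such that for all ε ∈ (0,1] and all u : Ω ∩ εℤ^d → ℝ^d vanishing on the boundary layer ∂_ε Ω (extended by 0 to εℤ^d), ‖u‖_{ℓ²_ε(int_ε Ω)} ≤ C_P ‖u‖_{h¹_ε(sint_ε Ω)}; moreover for any u : int_ε Ω → ℝ^d, ‖u‖_{h^{-1}_ε(int_ε Ω)} ≤ C_P ‖u‖_{ℓ²_ε(int_ε Ω)}. One may take C_P = diam(Ω) + 1. -/

import Mathlib

noncomputable section

/-- The lattice point `εz ∈ ℝ^d`. -/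
def latPt (d : ℕ) (ε : ℝ) (z : Fin d → ℤ) : EuclideanSpace ℝ (Fin d) :=
  WithLp.toLp 2 (fun i => ε * (z i : ℝ))

/-- The discrete interior `int_ε Ω`: `εz ∈ Ω` and `dist(εz, ∂Ω) > 2εR₀`. -/
def intEps (d : ℕ) (Ω : Set (EuclideanSpace ℝ (Fin d))) (ε R₀ : ℝ) :
    Set (Fin d → ℤ) :=
  { z | latPt d ε z ∈ Ω ∧ 2 * ε * R₀ < Metric.infDist (latPt d ε z) (frontier Ω) }

/-- The discrete semi-interior `sint_ε Ω`: `εz ∈ Ω` and `dist(εz, ∂Ω) > εR₀`. -/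
def sintEps (d : ℕ) (Ω : Set (EuclideanSpace ℝ (Fin d))) (ε R₀ : ℝ) :
    Set (Fin d → ℤ) :=
  { z | latPt d ε z ∈ Ω ∧ ε * R₀ < Metric.infDist (latPt d ε z) (frontier Ω) }

/-- The squared scaled discrete gradient
`|D_{𝓡,ε} u (x)|² = Σ_ρ Σ_j ((u(x+ερ)−u(x))/ε)_j²`. -/
def DnormSq (d : ℕ) (R : Finset (Fin d → ℤ)) (ε : ℝ)
    (u : (Fin d → ℤ) → (Fin d → ℝ)) (x : Fin d → ℤ) : ℝ :=
  ∑ ρ ∈ R, ∑ j, ((u (x + ρ) j - u x j) / ε) ^ 2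

/-- The `ℓ²_ε` norm over `int_ε Ω`. -/
def l2Norm (d : ℕ) (Ω : Set (EuclideanSpace ℝ (Fin d))) (ε R₀ : ℝ)
    (u : (Fin d → ℤ) → (Fin d → ℝ)) : ℝ :=
  Real.sqrt (ε ^ d * ∑ᶠ z ∈ intEps d Ω ε R₀, ∑ j, (u z j) ^ 2)

/-- The `h¹_ε` (semi-)norm over `sint_ε Ω`. -/
def h1Norm (d : ℕ) (R : Finset (Fin d → ℤ)) (Ω : Set (EuclideanSpace ℝ (Fin d)))
    (ε R₀ : ℝ) (u : (Fin d → ℤ) → (Fin d → ℝ)) : ℝ :=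
  Real.sqrt (ε ^ d * ∑ᶠ z ∈ sintEps d Ω ε R₀, DnormSq d R ε u z)

/-- The `h⁻¹_ε` norm over `int_ε Ω`. -/
def hm1Norm (d : ℕ) (R : Finset (Fin d → ℤ)) (Ω : Set (EuclideanSpace ℝ (Fin d)))
    (ε R₀ : ℝ) (u : (Fin d → ℤ) → (Fin d → ℝ)) : ℝ :=
  sSup { r : ℝ | ∃ φ : (Fin d → ℤ) → (Fin d → ℝ),
    (∀ z, z ∉ intEps d Ω ε R₀ → φ z = 0) ∧
    h1Norm d R Ω ε R₀ φ = 1 ∧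
    r = ε ^ d * ∑ᶠ z ∈ intEps d Ω ε R₀, ∑ j, u z j * φ z j }

/-!
Fix a direction `ρ ∈ 𝓡`; as a nonzero integer vector it has length between `1` and `R₀`, so one
lattice step moves by between `ε` and `εR₀`. From any `z ∈ int_ε Ω`, the point `z + Nρ` with
`diam Ω < Nε ≤ diam Ω + 1` lies outside `Ω`, where `u` vanishes; telescoping along the ray and
Cauchy–Schwarz give `|u z|² ≤ N ∑_{k<N} |u(z+(k+1)ρ) - u(z+kρ)|²`. Every difference is based at a
point of `sint_ε Ω`, and for fixed `k` the translation `z ↦ z + kρ` is injective, so summing over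
`z` yields `‖u‖²_{ℓ²} ≤ (Nε)² ‖u‖²_{h¹}`. The `h⁻¹` bound is the dual statement: pair `u` with a
test function `φ` by Cauchy–Schwarz and bound `‖φ‖_{ℓ²}` by the first part.
-/

open Finset

theorem sq_le_mul_sum_sq_sub_of_eq_zero (F : ℕ → ℝ) {N : ℕ} (hN : F N = 0) :
    F 0 ^ 2 ≤ N * ∑ k ∈ range N, (F (k + 1) - F k) ^ 2 := by
  have htel : F 0 = -∑ k ∈ range N, (F (k + 1) - F k) := by
    rw [sum_range_sub, hN]; ring
  rw [htel, neg_sq]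
  simpa using sq_sum_le_card_mul_sum_sq (s := range N) (f := fun k => F (k + 1) - F k)

theorem sum_comp_add_right_le_of_support_subset {G : Type*} [AddRightCancelMonoid G]
    (S T : Finset G) {g : G → ℝ} (hg : ∀ x, 0 ≤ g x) (hT : Function.support g ⊆ T) (a : G) :
    ∑ z ∈ S, g (z + a) ≤ ∑ x ∈ T, g x := by
  classical
  calc ∑ z ∈ S, g (z + a) = ∑ x ∈ S.map (addRightEmbedding a), g x := by simp
    _ = ∑ x ∈ S.map (addRightEmbedding a) with x ∈ T, g x :=
      (sum_filter_of_ne fun _ _ hx => hT hx).symm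
    _ ≤ ∑ x ∈ T, g x :=
      sum_le_sum_of_subset_of_nonneg (fun _ hx => (mem_filter.mp hx).2) fun x _ _ => hg x

theorem sum_sq_le_sq_mul_sum_sq_sub {G : Type*} [AddRightCancelMonoid G]
    {S T : Finset G} {ρ : G} {N : ℕ} {f : G → ℝ} (hf : ∀ z ∉ S, f z = 0)
    (hexit : ∀ z ∈ S, z + N • ρ ∉ S) (hT : ∀ x, x ∈ S ∨ x + ρ ∈ S → x ∈ T) :
    ∑ z ∈ S, f z ^ 2 ≤ N ^ 2 * ∑ x ∈ T, (f (x + ρ) - f x) ^ 2 := by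
  set g : G → ℝ := fun x => (f (x + ρ) - f x) ^ 2
  have hg : ∀ x, 0 ≤ g x := fun x => sq_nonneg _
  have hgT : Function.support g ⊆ T := by
    refine fun x hx => hT x ?_
    by_contra! h
    exact hx (by simp [g, hf x h.1, hf _ h.2])
  have hray : ∀ z ∈ S, f z ^ 2 ≤ N * ∑ k ∈ range N, g (z + k • ρ) := by
    intro z hz
    simpa [g, succ_nsmul, add_assoc] using
      sq_le_mul_sum_sq_sub_of_eq_zero (fun k => f (z + k • ρ)) (hf _ (hexit z hz))
  calc ∑ z ∈ S, f z ^ 2 ≤ ∑ z ∈ S, N * ∑ k ∈ range N, g (z + k • ρ) := sum_le_sum hray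
    _ = N * ∑ k ∈ range N, ∑ z ∈ S, g (z + k • ρ) := by rw [← mul_sum, sum_comm]
    _ ≤ N * ∑ k ∈ range N, ∑ x ∈ T, g x := by
      gcongr with k
      exact sum_comp_add_right_le_of_support_subset S T hg hgT _
    _ = N ^ 2 * ∑ x ∈ T, g x := by simp [sq, mul_assoc]

theorem one_le_sqrt_sum_sq_intCast {ι : Type*} [Fintype ι] {z : ι → ℤ} (hz : z ≠ 0) :
    1 ≤ √(∑ i, (z i : ℝ) ^ 2) := by
  obtain ⟨i, hi⟩ := Function.ne_iff.mp hz
  have hzi : (1 : ℝ) ≤ (z i : ℝ) ^ 2 := by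
    rw [← sq_abs, ← Int.cast_abs]
    exact one_le_pow₀ (by exact_mod_cast Int.one_le_abs hi)
  rw [Real.one_le_sqrt]
  exact hzi.trans
    (single_le_sum (f := fun j => (z j : ℝ) ^ 2) (fun j _ => sq_nonneg _) (mem_univ i))

theorem exists_nat_lt_mul_le_add {D ε : ℝ} (hD : 0 ≤ D) (hε : 0 < ε) :
    ∃ N : ℕ, D < N * ε ∧ N * ε ≤ D + ε := by
  refine ⟨⌊D / ε⌋₊ + 1, ?_, ?_⟩
  · rw [← div_lt_iff₀ hε]; exact_mod_cast Nat.lt_floor_add_one _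
  · rw [Nat.cast_succ, add_mul, one_mul, add_le_add_iff_right, ← le_div_iff₀ hε]
    exact Nat.floor_le (div_nonneg hD hε.le)

theorem mem_of_dist_lt_infDist_frontier {E : Type*} [NormedAddCommGroup E] [NormedSpace ℝ E]
    [FiniteDimensional ℝ E] {s : Set E} {x y : E} (hy : y ∈ s)
    (hxy : dist y x < Metric.infDist y (frontier s)) : x ∈ s := by
  by_contra hx
  obtain ⟨p, hp, hyp⟩ :=
    exists_mem_frontier_infDist_compl_eq_dist hy ((Set.ne_univ_iff_exists_notMem s).2 ⟨x, hx⟩)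
  have : Metric.infDist y (frontier s) ≤ Metric.infDist y sᶜ :=
    hyp ▸ Metric.infDist_le_dist_of_mem hp
  exact (hxy.trans_le this).not_ge (Metric.infDist_le_dist_of_mem hx)

section Lattice

variable {d : ℕ} {ε : ℝ}

theorem latPt_add (z w : Fin d → ℤ) : latPt d ε (z + w) = latPt d ε z + latPt d ε w := by
  ext i; simp [latPt, mul_add]

theorem latPt_nsmul (n : ℕ) (z : Fin d → ℤ) : latPt d ε (n • z) = n • latPt d ε z := by
  ext i; simp [latPt, mul_left_comm]

theorem norm_latPt (hε : 0 ≤ ε) (z : Fin d → ℤ) :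
    ‖latPt d ε z‖ = ε * √(∑ i, (z i : ℝ) ^ 2) := by
  have hsq : ∑ i, ‖latPt d ε z i‖ ^ 2 = ε ^ 2 * ∑ i, (z i : ℝ) ^ 2 := by
    simp [latPt, mul_sum, mul_pow]
  rw [EuclideanSpace.norm_eq, hsq, Real.sqrt_mul (sq_nonneg _), Real.sqrt_sq hε]

theorem finite_setOf_latPt_mem (hε : 0 < ε) {Ω : Set (EuclideanSpace ℝ (Fin d))}
    (hΩ : Bornology.IsBounded Ω) : {z | latPt d ε z ∈ Ω}.Finite := by
  obtain ⟨M, hM0, hM⟩ := hΩ.subset_closedBall_lt 0 0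
  have hbdd : Bornology.IsBounded {z : Fin d → ℤ | latPt d ε z ∈ Ω} := by
    refine (Metric.isBounded_closedBall (x := 0) (r := M / ε)).subset fun z hz => ?_
    rw [mem_closedBall_zero_iff, pi_norm_le_iff_of_nonneg (div_nonneg hM0.le hε.le)]
    intro i
    rw [le_div_iff₀ hε, Int.norm_eq_abs, mul_comm, ← abs_of_pos hε, ← abs_mul]
    have := (PiLp.norm_apply_le (latPt d ε z) i).trans (mem_closedBall_zero_iff.mp (hM hz))
    simpa [latPt] using this
  exact (Metric.isCompact_of_isClosed_isBounded (isClosed_discrete _) hbdd).finite_of_discrete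

variable {Ω : Set (EuclideanSpace ℝ (Fin d))} {R₀ : ℝ}

theorem mem_sintEps_of_add_mem_intEps {z ρ : Fin d → ℤ} (hρ : ‖latPt d ε ρ‖ ≤ ε * R₀)
    (hz : z + ρ ∈ intEps d Ω ε R₀) : z ∈ sintEps d Ω ε R₀ := by
  have hdist : dist (latPt d ε (z + ρ)) (latPt d ε z) ≤ ε * R₀ := by
    rwa [latPt_add, dist_self_add_left]
  have hR₀ : 0 ≤ ε * R₀ := (norm_nonneg _).trans hρ
  refine ⟨mem_of_dist_lt_infDist_frontier hz.1 (by linarith [hz.2]), ?_⟩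
  linarith [hz.2, Metric.infDist_le_infDist_add_dist (s := frontier Ω)
    (x := latPt d ε (z + ρ)) (y := latPt d ε z)]

theorem intEps_subset_sintEps (h : 0 ≤ ε * R₀) : intEps d Ω ε R₀ ⊆ sintEps d Ω ε R₀ :=
  fun _ hz => ⟨hz.1, by linarith [hz.2]⟩

theorem add_nsmul_notMem_intEps (hΩ : Bornology.IsBounded Ω) {z ρ : Fin d → ℤ} {N : ℕ}
    (hN : Metric.diam Ω < N * ‖latPt d ε ρ‖) (hz : z ∈ intEps d Ω ε R₀) :
    z + N • ρ ∉ intEps d Ω ε R₀ := by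
  intro hzN
  have := Metric.dist_le_diam_of_mem hΩ hz.1 hzN.1
  rw [latPt_add, latPt_nsmul, dist_self_add_right, RCLike.norm_nsmul ℝ, nsmul_eq_mul] at this
  linarith

end Lattice

section Norms

variable {d : ℕ} {R : Finset (Fin d → ℤ)} {Ω : Set (EuclideanSpace ℝ (Fin d))} {ε R₀ : ℝ}

theorem sum_sq_sub_le_sq_mul_DnormSq {ρ : Fin d → ℤ} (hρ : ρ ∈ R) (hε : ε ≠ 0)
    (u : (Fin d → ℤ) → Fin d → ℝ) (x : Fin d → ℤ) :
    ∑ j, (u (x + ρ) j - u x j) ^ 2 ≤ ε ^ 2 * DnormSq d R ε u x := by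
  calc ∑ j, (u (x + ρ) j - u x j) ^ 2 = ε ^ 2 * ∑ j, ((u (x + ρ) j - u x j) / ε) ^ 2 := by
        simp [mul_sum, div_pow, mul_div_cancel₀ _ (pow_ne_zero 2 hε)]
    _ ≤ ε ^ 2 * DnormSq d R ε u x := by
      gcongr
      exact single_le_sum (f := fun ρ => ∑ j, ((u (x + ρ) j - u x j) / ε) ^ 2)
        (fun _ _ => sum_nonneg fun _ _ => sq_nonneg _) hρ

theorem l2Norm_eq_sqrt_sum (hfin : (intEps d Ω ε R₀).Finite) (u : (Fin d → ℤ) → Fin d → ℝ) :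
    l2Norm d Ω ε R₀ u = √(ε ^ d * ∑ z ∈ hfin.toFinset, ∑ j, u z j ^ 2) := by
  rw [l2Norm, finsum_mem_eq_finite_toFinset_sum _ hfin]

theorem l2Norm_le_mul_h1Norm {ρ : Fin d → ℤ} (hρ : ρ ∈ R) (hε : 0 < ε) {N : ℕ}
    (hfin : (sintEps d Ω ε R₀).Finite)
    (hT : ∀ z, z ∈ intEps d Ω ε R₀ ∨ z + ρ ∈ intEps d Ω ε R₀ → z ∈ sintEps d Ω ε R₀)
    (hexit : ∀ z ∈ intEps d Ω ε R₀, z + N • ρ ∉ intEps d Ω ε R₀)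
    {u : (Fin d → ℤ) → Fin d → ℝ} (hu : ∀ z, z ∉ intEps d Ω ε R₀ → u z = 0) :
    l2Norm d Ω ε R₀ u ≤ N * ε * h1Norm d R Ω ε R₀ u := by
  have hSfin : (intEps d Ω ε R₀).Finite := hfin.subset fun z hz => hT z (.inl hz)
  set S := hSfin.toFinset
  set T := hfin.toFinset
  have hcoord : ∀ j, ∑ z ∈ S, u z j ^ 2 ≤ N ^ 2 * ∑ x ∈ T, (u (x + ρ) j - u x j) ^ 2 := by
    intro j
    refine sum_sq_le_sq_mul_sum_sq_sub (fun z hz => ?_) (fun z hz => ?_) (fun x hx => ?_)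
    · simp [hu z (by simpa [S] using hz)]
    · simpa [S] using hexit z (by simpa [S] using hz)
    · simpa [S, T] using hT x (by simpa [S] using hx)
  have hsum : ∑ z ∈ S, ∑ j, u z j ^ 2 ≤ (N * ε) ^ 2 * ∑ x ∈ T, DnormSq d R ε u x := by
    calc ∑ z ∈ S, ∑ j, u z j ^ 2 ≤ ∑ j, N ^ 2 * ∑ x ∈ T, (u (x + ρ) j - u x j) ^ 2 := by
          rw [sum_comm]; exact sum_le_sum fun j _ => hcoord j
      _ = N ^ 2 * ∑ x ∈ T, ∑ j, (u (x + ρ) j - u x j) ^ 2 := by rw [← mul_sum, sum_comm]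
      _ ≤ N ^ 2 * ∑ x ∈ T, ε ^ 2 * DnormSq d R ε u x := by
          gcongr with x
          exact sum_sq_sub_le_sq_mul_DnormSq hρ hε.ne' u x
      _ = (N * ε) ^ 2 * ∑ x ∈ T, DnormSq d R ε u x := by rw [← mul_sum]; ring
  rw [l2Norm_eq_sqrt_sum hSfin, h1Norm, finsum_mem_eq_finite_toFinset_sum _ hfin,
    ← Real.sqrt_sq (by positivity : 0 ≤ (N : ℝ) * ε), ← Real.sqrt_mul (sq_nonneg _)]
  refine Real.sqrt_le_sqrt ?_
  calc _ ≤ ε ^ d * ((N * ε) ^ 2 * ∑ x ∈ T, DnormSq d R ε u x) := by gcongr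
    _ = _ := mul_left_comm _ _ _

theorem pairing_le_l2Norm_mul_l2Norm (hε : 0 ≤ ε) (hfin : (intEps d Ω ε R₀).Finite)
    (u φ : (Fin d → ℤ) → Fin d → ℝ) :
    ε ^ d * ∑ᶠ z ∈ intEps d Ω ε R₀, ∑ j, u z j * φ z j ≤ l2Norm d Ω ε R₀ u * l2Norm d Ω ε R₀ φ := by
  have hCS := Real.sum_mul_le_sqrt_mul_sqrt (hfin.toFinset ×ˢ univ)
    (fun p => u p.1 p.2) (fun p => φ p.1 p.2)
  simp only [sum_product] at hCS
  rw [finsum_mem_eq_finite_toFinset_sum _ hfin, l2Norm_eq_sqrt_sum hfin, l2Norm_eq_sqrt_sum hfin,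
    Real.sqrt_mul (by positivity), Real.sqrt_mul (by positivity),
    mul_mul_mul_comm, Real.mul_self_sqrt (by positivity)]
  gcongr

theorem hm1Norm_le_mul_l2Norm (hε : 0 ≤ ε) (hfin : (intEps d Ω ε R₀).Finite) {C : ℝ} (hC : 0 ≤ C)
    (hP : ∀ φ : (Fin d → ℤ) → Fin d → ℝ, (∀ z, z ∉ intEps d Ω ε R₀ → φ z = 0) →
      l2Norm d Ω ε R₀ φ ≤ C * h1Norm d R Ω ε R₀ φ)
    (u : (Fin d → ℤ) → Fin d → ℝ) :
    hm1Norm d R Ω ε R₀ u ≤ C * l2Norm d Ω ε R₀ u := by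
  refine Real.sSup_le ?_ (mul_nonneg hC (Real.sqrt_nonneg _))
  rintro _ ⟨φ, hφ, hφ1, rfl⟩
  calc _ ≤ l2Norm d Ω ε R₀ u * l2Norm d Ω ε R₀ φ := pairing_le_l2Norm_mul_l2Norm hε hfin u φ
    _ ≤ l2Norm d Ω ε R₀ u * C := by
        gcongr
        · exact Real.sqrt_nonneg _
        · simpa [hφ1] using hP φ hφ
    _ = C * l2Norm d Ω ε R₀ u := mul_comm _ _

end Norms

theorem discrete_poincare_general
    (d : ℕ) (R : Finset (Fin d → ℤ))
    (h0 : (0 : Fin d → ℤ) ∉ R) (hRne : R.Nonempty)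
    (R₀ : ℝ)
    (hR₀ : ∀ ρ ∈ R, Real.sqrt (∑ i, ((ρ i : ℝ)) ^ 2) ≤ R₀)
    (Ω : Set (EuclideanSpace ℝ (Fin d)))
    (hΩb : Bornology.IsBounded Ω)
    (ε : ℝ) (hε : ε ∈ Set.Ioc (0 : ℝ) 1) :
    (∀ u : (Fin d → ℤ) → (Fin d → ℝ),
      (∀ z, z ∉ intEps d Ω ε R₀ → u z = 0) →
      l2Norm d Ω ε R₀ u ≤ (Metric.diam Ω + 1) * h1Norm d R Ω ε R₀ u) ∧
    (∀ u : (Fin d → ℤ) → (Fin d → ℝ),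
      hm1Norm d R Ω ε R₀ u ≤ (Metric.diam Ω + 1) * l2Norm d Ω ε R₀ u) := by
  obtain ⟨hε0, hε1⟩ := hε
  obtain ⟨ρ, hρ⟩ := hRne
  have hρε : ε ≤ ‖latPt d ε ρ‖ := by
    rw [norm_latPt hε0.le]
    exact le_mul_of_one_le_right hε0.le (one_le_sqrt_sum_sq_intCast (ne_of_mem_of_not_mem hρ h0))
  have hρR₀ : ‖latPt d ε ρ‖ ≤ ε * R₀ := by
    rw [norm_latPt hε0.le]
    exact mul_le_mul_of_nonneg_left (hR₀ ρ hρ) hε0.le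
  obtain ⟨N, hDN, hND⟩ := exists_nat_lt_mul_le_add (Metric.diam_nonneg (s := Ω)) hε0
  have hfin : (sintEps d Ω ε R₀).Finite :=
    (finite_setOf_latPt_mem hε0 hΩb).subset fun _ hz => hz.1
  have hsub := intEps_subset_sintEps (Ω := Ω) ((norm_nonneg _).trans hρR₀)
  have hP : ∀ u : (Fin d → ℤ) → (Fin d → ℝ), (∀ z, z ∉ intEps d Ω ε R₀ → u z = 0) →
      l2Norm d Ω ε R₀ u ≤ (Metric.diam Ω + 1) * h1Norm d R Ω ε R₀ u := by
    intro u hu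
    refine (l2Norm_le_mul_h1Norm hρ hε0 hfin (N := N) ?_ ?_ hu).trans ?_
    · rintro z (hz | hz)
      exacts [hsub hz, mem_sintEps_of_add_mem_intEps hρR₀ hz]
    · exact fun z => add_nsmul_notMem_intEps hΩb (by nlinarith)
    · gcongr
      · exact Real.sqrt_nonneg _
      · linarith
  exact ⟨hP, hm1Norm_le_mul_l2Norm hε0.le (hfin.subset hsub) (by positivity) hP⟩

/-- discrete Poincaré inequality. With `C_P = diam Ω + 1`, for
all `ε ∈ (0,1]` one has `‖u‖_{ℓ²_ε} ≤ C_P ‖u‖_{h¹_ε}` for `u` vanishing on the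
discrete boundary layer, and `‖u‖_{h⁻¹_ε} ≤ C_P ‖u‖_{ℓ²_ε}` for all `u`. -/
theorem discrete_poincare
    (d : ℕ) (hd : 0 < d) (R : Finset (Fin d → ℤ))
    (h0 : (0 : Fin d → ℤ) ∉ R) (hRne : R.Nonempty)
    (R₀ : ℝ) (hR₀pos : 0 < R₀)
    (hR₀ : ∀ ρ ∈ R, Real.sqrt (∑ i, ((ρ i : ℝ)) ^ 2) ≤ R₀)
    (Ω : Set (EuclideanSpace ℝ (Fin d)))
    (hΩo : IsOpen Ω) (hΩb : Bornology.IsBounded Ω)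
    (ε : ℝ) (hε : ε ∈ Set.Ioc (0 : ℝ) 1) :
    (∀ u : (Fin d → ℤ) → (Fin d → ℝ),
      (∀ z, z ∉ intEps d Ω ε R₀ → u z = 0) →
      l2Norm d Ω ε R₀ u ≤ (Metric.diam Ω + 1) * h1Norm d R Ω ε R₀ u) ∧
    (∀ u : (Fin d → ℤ) → (Fin d → ℝ),
      hm1Norm d R Ω ε R₀ u ≤ (Metric.diam Ω + 1) * l2Norm d Ω ε R₀ u) :=
  discrete_poincare_general d R h0 hRne R₀ hR₀ Ω hΩb ε hε

end
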